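/- arXiv:1706.05675 — 11 statements merged into one kernel-verified Lean document; each statement's English description precedes it below -/
import Mathlib

section
/- For every x ∈ W(A), there exists a unique sequence a_0, a_1, a_2, … of elements of A such that x = Σ_{i=0}^∞ s_φ(a_i)·V^i(1) in W(A), i.e., such that for every n ≥ 0 the element x − Σ_{i=0}^{n−1} s_φ(a_i)·V^i(1) lies in the image of V^n. -/
open WittVector

/-- `x = Σ_{i=0}^∞ s(a_i)·V^i(1)` in `W(A)`: for every `n`, the difference
`x − Σ_{i<n} s(a_i)·V^i(1)` lies in the image of `V^n`. -/
def IsVSeries (p : ℕ) [Fact p.Prime] {k : Type*} [CommRing k]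
    (s : WittVector p k →+* WittVector p (WittVector p k))
    (x : WittVector p (WittVector p k)) (a : ℕ → WittVector p k) : Prop :=
  ∀ n : ℕ, ∃ y : WittVector p (WittVector p k),
    x - ∑ i ∈ Finset.range n, s (a i) * (⇑(WittVector.verschiebung))^[i] 1
      = (⇑(WittVector.verschiebung))^[n] y

section Aux

variable {p : ℕ} [Fact p.Prime] {R : Type*} [CommRing R]

lemma ghostComponent_zero_eq' (x : WittVector p R) :
    ghostComponent 0 x = x.coeff 0 := by
  simp [ghostComponent_apply, wittPolynomial_zero]

lemma verschiebung_injective' :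
    Function.Injective (⇑(verschiebung : WittVector p R →+ WittVector p R)) := by
  intro x y h
  ext n
  have := congrArg (fun z : WittVector p R => z.coeff (n + 1)) h
  simpa [verschiebung_coeff_succ] using this

lemma iterate_verschiebung_sub (n : ℕ) (u v : WittVector p R) :
    (⇑(verschiebung : WittVector p R →+ WittVector p R))^[n] (u - v)
      = (⇑verschiebung)^[n] u - (⇑verschiebung)^[n] v := by
  induction n with
  | zero => simp
  | succ n ih => simp [Function.iterate_succ_apply', ih, map_sub]

lemma ghostComponent_zero_frob_iterate (n : ℕ) (z : WittVector p R) :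
    ghostComponent 0 ((⇑(frobenius : WittVector p R →+* WittVector p R))^[n] z)
      = ghostComponent n z := by
  suffices h : ∀ m : ℕ, ghostComponent m ((⇑(frobenius : WittVector p R →+* _))^[n] z)
      = ghostComponent (m + n) z by simpa using h 0
  induction n with
  | zero => simp
  | succ n ih =>
      intro m
      rw [Function.iterate_succ_apply', ghostComponent_frobenius, ih (m + 1),
        show m + 1 + n = m + (n + 1) by omega]

lemma mul_iterate_verschiebung_one (u : WittVector p R) (n : ℕ) :
    u * (⇑(verschiebung : WittVector p R →+ WittVector p R))^[n] 1
      = (⇑verschiebung)^[n] ((⇑(frobenius : WittVector p R →+* _))^[n] u) := by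
  rw [mul_comm, iterate_verschiebung_mul_left, one_mul]

end Aux

theorem stmt_1 (p : ℕ) [Fact p.Prime] (hp : Odd p)
    (k : Type*) [CommRing k] [CharP k p] [PerfectRing k p]
    (s : WittVector p k →+* WittVector p (WittVector p k))
    (hs : ∀ (a : WittVector p k) (n : ℕ),
      WittVector.ghostComponent n (s a) = (⇑(WittVector.frobenius))^[n] a)
    (x : WittVector p (WittVector p k)) :
    ∃! a : ℕ → WittVector p k, IsVSeries p s x a := by
  classical
  set e := frobeniusEquiv p k with he
  have hecoe : (⇑e : WittVector p k → WittVector p k)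
      = ⇑(WittVector.frobenius (p := p) (R := k)) := rfl
  have hfrobinv : ∀ (n : ℕ) (c : WittVector p k),
      (⇑(frobenius : WittVector p k →+* _))^[n] ((⇑e.symm)^[n] c) = c := by
    intro n c
    rw [← hecoe]
    exact Function.LeftInverse.iterate e.apply_symm_apply n c
  have hfrobinj : ∀ n : ℕ, Function.Injective
      ((⇑(frobenius : WittVector p k →+* _))^[n]) :=
    fun n => Function.Injective.iterate (frobenius_bijective p k).injective n
  -- the recursive construction
  let step : ℕ → WittVector p (WittVector p k) → WittVector p (WittVector p k) :=
    fun n z => WittVector.mk p (fun i =>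
      (z - (⇑(frobenius : WittVector p (WittVector p k) →+* _))^[n]
        (s ((⇑e.symm)^[n] (z.coeff 0)))).coeff (i + 1))
  let y : ℕ → WittVector p (WittVector p k) := fun n => Nat.rec x step n
  let a : ℕ → WittVector p k := fun n => (⇑e.symm)^[n] ((y n).coeff 0)
  have hy0 : y 0 = x := rfl
  have hV : ∀ n : ℕ, verschiebung (y (n + 1))
      = y n - (⇑(frobenius : WittVector p (WittVector p k) →+* _))^[n] (s (a n)) := by
    intro n
    set z := y n - (⇑(frobenius : WittVector p (WittVector p k) →+* _))^[n] (s (a n)) with hz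
    have hz0 : z.coeff 0 = 0 := by
      have := ghostComponent_zero_eq' (p := p) z
      rw [← this, hz, map_sub, ghostComponent_zero_frob_iterate, hs,
        ghostComponent_zero_eq']
      show (y n).coeff 0 - (⇑(frobenius : WittVector p k →+* _))^[n] (a n) = 0
      rw [show a n = (⇑e.symm)^[n] ((y n).coeff 0) from rfl, hfrobinv, sub_self]
    have hy1 : y (n + 1) = WittVector.mk p (fun i => z.coeff (i + 1)) := rfl
    rw [hy1]
    ext m
    cases m with
    | zero => rw [verschiebung_coeff_zero, hz0]
    | succ m => rw [verschiebung_coeff_succ]; simp [coeff_mk]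
  have hmain : ∀ n : ℕ,
      x - ∑ i ∈ Finset.range n, s (a i) * (⇑(verschiebung))^[i] 1
        = (⇑(verschiebung))^[n] (y n) := by
    intro n
    induction n with
    | zero => simp [hy0]
    | succ n ih =>
        rw [Finset.sum_range_succ, ← sub_sub, ih, mul_iterate_verschiebung_one,
          ← iterate_verschiebung_sub, ← hV, ← Function.iterate_succ_apply]
  refine ⟨a, fun n => ⟨y n, hmain n⟩, ?_⟩
  intro b hb
  funext n
  induction n using Nat.strong_induction_on with
  | _ n ih =>
    obtain ⟨u, hu⟩ := hb (n + 1)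
    obtain ⟨v, hv⟩ := (fun m => ⟨y m, hmain m⟩ : IsVSeries p s x a) (n + 1)
    rw [Finset.sum_range_succ] at hu hv
    have hsum : ∑ i ∈ Finset.range n, s (b i) * (⇑(verschiebung))^[i] 1
        = ∑ i ∈ Finset.range n, s (a i) * (⇑(verschiebung))^[i] 1 :=
      Finset.sum_congr rfl (fun i hi => by rw [ih i (Finset.mem_range.mp hi)])
    rw [hsum] at hu
    have key : s (b n - a n) * (⇑(verschiebung))^[n] 1
        = (⇑(verschiebung))^[n + 1] (v - u) := by
      rw [map_sub, sub_mul, iterate_verschiebung_sub]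
      linear_combination hv - hu
    rw [mul_iterate_verschiebung_one, Function.iterate_succ_apply] at key
    have key2 : (⇑(frobenius : WittVector p (WittVector p k) →+* _))^[n] (s (b n - a n))
        = verschiebung (v - u) :=
      Function.Injective.iterate (verschiebung_injective' (p := p)
        (R := WittVector p k)) n key
    have key3 : ghostComponent n (s (b n - a n)) = 0 := by
      rw [← ghostComponent_zero_frob_iterate, key2, ghostComponent_zero_eq',
        verschiebung_coeff_zero]
    rw [hs] at key3
    have : b n - a n = 0 := by
      apply hfrobinj n
      simpa using key3
    exact sub_eq_zero.mp this
end

section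
/- Suppose x ∈ W(A) and the sequence (a_i) in A satisfy x = Σ_{i=0}^∞ s_φ(a_i)·V^i(1). Then V(x) = Σ_{i=1}^∞ s_φ(φ^{−1}(a_{i−1}))·V^i(1); that is, the sequence (b_i) defined by b_0 = 0 and b_i = φ^{−1}(a_{i−1}) for i ≥ 1 satisfies V(x) = Σ_{i=0}^∞ s_φ(b_i)·V^i(1). -/
/-!
`W(k)` is `p`-torsion free, so the ghost map of `W(W(k))` is injective; comparing ghost
components gives `F ∘ s_φ = s_φ ∘ φ`. The projection formula `V(y · F z) = V(y) · z` then turns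
each term `s_φ(b_{i+1}) · V^{i+1}(1)` into `V(s_φ(a_i) · V^i(1))`, so applying `V` to the partial
sums of the series for `x` gives those of the series for `V(x)`.
-/

open WittVector

namespace WittVector

variable {p : ℕ} [Fact p.Prime] {R : Type*} [CommRing R]

lemma ghostComponent_eq_sum (n : ℕ) (x : WittVector p R) :
    ghostComponent n x = ∑ i ∈ Finset.range (n + 1), (p : R) ^ i * x.coeff i ^ p ^ (n - i) := by
  simp [ghostComponent_apply, wittPolynomial_eq_sum_C_mul_X_pow]

lemma ghostMap_injective_of_isLeftRegular (hp : IsLeftRegular (p : R)) :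
    Function.Injective (ghostMap : WittVector p R → ℕ → R) := by
  intro x y h
  ext n
  induction n using Nat.strong_induction_on with
  | _ n ih =>
    have hn := congrFun h n
    simp only [ghostMap_apply, ghostComponent_eq_sum, Finset.sum_range_succ, Nat.sub_self,
      pow_zero, pow_one] at hn
    rw [Finset.sum_congr rfl fun i hi => by rw [ih i (Finset.mem_range.mp hi)]] at hn
    exact (hp.pow n) (add_left_cancel hn)

lemma isLeftRegular_natCast_prime {k : Type*} [CommRing k] [CharP k p] [PerfectRing k p] :
    IsLeftRegular (p : WittVector p k) := by
  intro u v h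
  rw [← sub_eq_zero]
  apply eq_zero_of_p_mul_eq_zero
  rw [mul_comm, mul_sub]
  exact sub_eq_zero.mpr h

lemma frobenius_apply_eq_of_ghostComponent_eq_iterate (hp : IsLeftRegular (p : R))
    {σ : R →+* R} {s : R →+* WittVector p R}
    (hs : ∀ a n, ghostComponent n (s a) = σ^[n] a) (a : R) :
    frobenius (s a) = s (σ a) := by
  apply ghostMap_injective_of_isLeftRegular hp
  funext n
  simp only [ghostMap_apply, ghostComponent_frobenius, hs, ← Function.iterate_succ_apply]

end WittVector

lemma isVSeries_verschiebung {p : ℕ} [Fact p.Prime] {k : Type*} [CommRing k]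
    {s : WittVector p k →+* WittVector p (WittVector p k)}
    {x : WittVector p (WittVector p k)} {a b : ℕ → WittVector p k}
    (hxa : IsVSeries p s x a) (hb0 : b 0 = 0)
    (hb : ∀ i, WittVector.frobenius (s (b (i + 1))) = s (a i)) :
    IsVSeries p s (verschiebung x) b := by
  have hterm (i : ℕ) : s (b (i + 1)) * (⇑verschiebung)^[i + 1] 1
      = verschiebung (s (a i) * (⇑verschiebung)^[i] 1) := by
    rw [← hb, mul_comm, mul_comm (WittVector.frobenius _), verschiebung_mul_frobenius,
      Function.iterate_succ_apply']
  rintro (_ | n)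
  · exact ⟨verschiebung x, by simp⟩
  · obtain ⟨y, hy⟩ := hxa n
    refine ⟨y, ?_⟩
    rw [Finset.sum_range_succ', hb0, map_zero, zero_mul, add_zero, Finset.sum_congr rfl
      fun i _ => hterm i, ← map_sum, ← map_sub, hy, Function.iterate_succ_apply']

theorem stmt_2_general (p : ℕ) [Fact p.Prime]
    (k : Type*) [CommRing k] [CharP k p] [PerfectRing k p]
    (s : WittVector p k →+* WittVector p (WittVector p k))
    (hs : ∀ (a : WittVector p k) (n : ℕ),
      WittVector.ghostComponent n (s a) = (⇑(WittVector.frobenius))^[n] a)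
    (x : WittVector p (WittVector p k)) (a : ℕ → WittVector p k)
    (hxa : IsVSeries p s x a)
    (b : ℕ → WittVector p k) (hb0 : b 0 = 0)
    (hb : ∀ i : ℕ, 1 ≤ i → b i = (WittVector.frobeniusEquiv p k).symm (a (i - 1))) :
    IsVSeries p s (WittVector.verschiebung x) b := by
  refine isVSeries_verschiebung hxa hb0 fun i => ?_
  rw [frobenius_apply_eq_of_ghostComponent_eq_iterate isLeftRegular_natCast_prime
    (σ := frobenius) hs, hb (i + 1) (by omega), Nat.add_sub_cancel,
    ← WittVector.frobeniusEquiv_apply, RingEquiv.apply_symm_apply]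

theorem stmt_2 (p : ℕ) [Fact p.Prime] (hp : Odd p)
    (k : Type*) [CommRing k] [CharP k p] [PerfectRing k p]
    (s : WittVector p k →+* WittVector p (WittVector p k))
    (hs : ∀ (a : WittVector p k) (n : ℕ),
      WittVector.ghostComponent n (s a) = (⇑(WittVector.frobenius))^[n] a)
    (x : WittVector p (WittVector p k)) (a : ℕ → WittVector p k)
    (hxa : IsVSeries p s x a)
    (b : ℕ → WittVector p k) (hb0 : b 0 = 0)
    (hb : ∀ i : ℕ, 1 ≤ i → b i = (WittVector.frobeniusEquiv p k).symm (a (i - 1))) :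
    IsVSeries p s (WittVector.verschiebung x) b :=
  stmt_2_general p k s hs x a hxa b hb0 hb
end

section
/- Let a ∈ A. Then there exists a sequence (c_i) in A with c_0 = a and p^i·φ^i(c_i) = a^{p^i} − φ(a)^{p^{i−1}} for every i ≥ 1, and for any such sequence the Teichmüller lift satisfies [a] = Σ_{i=0}^∞ s_φ(c_i)·V^i(1) in W(A). -/
open WittVector

section Helpers

variable {p : ℕ} [Fact p.Prime]

private lemma ghost_eq {R : Type*} [CommRing R] (n : ℕ) (x : WittVector p R) :
    WittVector.ghostComponent n x
      = ∑ i ∈ Finset.range (n + 1), (p : R) ^ i * x.coeff i ^ p ^ (n - i) := by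
  rw [WittVector.ghostComponent_apply, aeval_wittPolynomial]

private lemma ghost0_eq {R : Type*} [CommRing R] (x : WittVector p R) :
    WittVector.ghostComponent 0 x = x.coeff 0 := by
  rw [ghost_eq]; simp

private lemma versch_inj {R : Type*} [CommRing R] :
    Function.Injective (⇑(WittVector.verschiebung) : WittVector p R → WittVector p R) := by
  intro x y h
  ext n
  have := congrArg (fun z : WittVector p R => z.coeff (n + 1)) h
  simpa [WittVector.verschiebung_coeff_succ] using this

private lemma shift1 {R : Type*} [CommRing R] (z : WittVector p R) (h : z.coeff 0 = 0) :
    z = WittVector.verschiebung (WittVector.mk p fun n => z.coeff (n + 1)) := by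
  ext n
  cases n with
  | zero => simpa [WittVector.verschiebung_coeff_zero] using h
  | succ n => simp [WittVector.verschiebung_coeff_succ, WittVector.coeff_mk]

private lemma shiftn {R : Type*} [CommRing R] (n : ℕ) :
    ∀ z : WittVector p R, (∀ j < n, z.coeff j = 0) →
      ∃ y, z = (⇑(WittVector.verschiebung))^[n] y := by
  induction n with
  | zero => exact fun z _ => ⟨z, rfl⟩
  | succ n ih =>
    intro z h
    have h0 : z.coeff 0 = 0 := h 0 (Nat.succ_pos n)
    set w : WittVector p R := WittVector.mk p fun j => z.coeff (j + 1) with hw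
    have hz : z = WittVector.verschiebung w := shift1 z h0
    have hwc : ∀ j < n, w.coeff j = 0 := by
      intro j hj
      have : w.coeff j = z.coeff (j + 1) := by rw [hw, WittVector.coeff_mk]
      rw [this]
      exact h (j + 1) (by omega)
    obtain ⟨y, hy⟩ := ih w hwc
    refine ⟨y, ?_⟩
    rw [hz, hy]
    exact (Function.iterate_succ_apply' _ _ _).symm

private lemma ptf {k : Type*} [CommRing k] [CharP k p] [PerfectRing k p]
    (x : WittVector p k) (h : (p : WittVector p k) * x = 0) : x = 0 := by
  have h2 : WittVector.verschiebung (WittVector.frobenius x) = 0 := by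
    rw [WittVector.verschiebung_frobenius, mul_comm, h]
  have h3 : WittVector.frobenius x = 0 := by
    apply versch_inj
    simpa using h2
  have := (WittVector.frobenius_bijective p k).injective
  apply this
  simpa using h3

private lemma ptfn {k : Type*} [CommRing k] [CharP k p] [PerfectRing k p]
    (m : ℕ) : ∀ x : WittVector p k, (p : WittVector p k) ^ m * x = 0 → x = 0 := by
  induction m with
  | zero => intro x h; simpa using h
  | succ m ih =>
    intro x h
    apply ptf
    apply ih
    rw [← mul_assoc, ← pow_succ]
    exact h

private lemma ghost_vanish_coeff {k : Type*} [CommRing k] [CharP k p] [PerfectRing k p]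
    (z : WittVector p (WittVector p k)) (n : ℕ)
    (h : ∀ m < n, WittVector.ghostComponent m z = 0) : ∀ m < n, z.coeff m = 0 := by
  intro m
  induction m using Nat.strong_induction_on with
  | _ m ih =>
    intro hm
    have hg := h m hm
    rw [ghost_eq] at hg
    have hz : ∀ i ∈ Finset.range m,
        (p : WittVector p k) ^ i * z.coeff i ^ p ^ (m - i) = 0 := by
      intro i hi
      have hi' := Finset.mem_range.mp hi
      rw [ih i hi' (lt_trans hi' hm), zero_pow (pow_ne_zero _ (Fact.out : p.Prime).ne_zero),
        mul_zero]
    rw [Finset.sum_range_succ, Finset.sum_eq_zero hz, zero_add, Nat.sub_self, pow_zero,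
      pow_one] at hg
    exact ptfn m _ hg

private lemma ghost_viter {R : Type*} [CommRing R] (i : ℕ) :
    ∀ (m : ℕ) (x : WittVector p R),
      WittVector.ghostComponent m ((⇑(WittVector.verschiebung))^[i] x)
        = if i ≤ m then (p : R) ^ i * WittVector.ghostComponent (m - i) x else 0 := by
  induction i with
  | zero => intro m x; simp
  | succ i ih =>
    intro m x
    rw [Function.iterate_succ_apply']
    cases m with
    | zero =>
      rw [WittVector.ghostComponent_zero_verschiebung, if_neg (by omega)]
    | succ m =>
      rw [WittVector.ghostComponent_verschiebung, ih m x, Nat.succ_sub_succ]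
      by_cases hle : i ≤ m
      · rw [if_pos hle, if_pos (by omega), pow_succ]; ring
      · rw [if_neg hle, if_neg (by omega), mul_zero]

private lemma frob_iter_inv {k : Type*} [CommRing k] [CharP k p] [PerfectRing k p]
    (i : ℕ) (x : WittVector p k) :
    (⇑(WittVector.frobenius))^[i] ((⇑(WittVector.frobeniusEquiv p k).symm)^[i] x) = x := by
  induction i generalizing x with
  | zero => rfl
  | succ n ih =>
    rw [Function.iterate_succ_apply', Function.iterate_succ_apply, ih]
    have := (WittVector.frobeniusEquiv p k).apply_symm_apply x
    rwa [WittVector.frobeniusEquiv_apply] at this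

end Helpers

theorem stmt_3 (p : ℕ) [Fact p.Prime] (hp : Odd p)
    (k : Type*) [CommRing k] [CharP k p] [PerfectRing k p]
    (s : WittVector p k →+* WittVector p (WittVector p k))
    (hs : ∀ (a : WittVector p k) (n : ℕ),
      WittVector.ghostComponent n (s a) = (⇑(WittVector.frobenius))^[n] a)
    (a : WittVector p k) :
    (∃ c : ℕ → WittVector p k, c 0 = a ∧ ∀ i : ℕ, 1 ≤ i →
        (p : WittVector p k) ^ i * (⇑(WittVector.frobenius))^[i] (c i)
          = a ^ p ^ i - (WittVector.frobenius a) ^ p ^ (i - 1)) ∧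
    (∀ c : ℕ → WittVector p k, (c 0 = a ∧ ∀ i : ℕ, 1 ≤ i →
        (p : WittVector p k) ^ i * (⇑(WittVector.frobenius))^[i] (c i)
          = a ^ p ^ i - (WittVector.frobenius a) ^ p ^ (i - 1)) →
      IsVSeries p s (WittVector.teichmuller p a) c) := by
  constructor
  · -- existence of the sequence c
    -- first, p ∣ a^p - F a
    have hc0 : (a ^ p - WittVector.frobenius a).coeff 0 = 0 := by
      rw [← ghost0_eq, map_sub, map_pow, ghost0_eq, ghost0_eq,
        WittVector.coeff_frobenius_charP, sub_self]
    have h1 : (p : WittVector p k) ∣ a ^ p - WittVector.frobenius a := by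
      set z := a ^ p - WittVector.frobenius a with hz
      set y := WittVector.mk p fun n => z.coeff (n + 1) with hy
      have hzy : z = WittVector.verschiebung y := shift1 z hc0
      refine ⟨(WittVector.frobeniusEquiv p k).symm y, ?_⟩
      have hF : WittVector.frobenius ((WittVector.frobeniusEquiv p k).symm y) = y := by
        have := (WittVector.frobeniusEquiv p k).apply_symm_apply y
        rwa [WittVector.frobeniusEquiv_apply] at this
      rw [hzy]
      conv_lhs => rw [← hF]
      rw [WittVector.verschiebung_frobenius, mul_comm]
    have hdvd : ∀ i : ℕ, 1 ≤ i →
        (p : WittVector p k) ^ i ∣ a ^ p ^ i - (WittVector.frobenius a) ^ p ^ (i - 1) := by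
      intro i hi
      obtain ⟨m, rfl⟩ : ∃ m, i = m + 1 := ⟨i - 1, by omega⟩
      have hd := dvd_sub_pow_of_dvd_sub h1 m
      have e1 : (a ^ p) ^ p ^ m = a ^ p ^ (m + 1) := by
        rw [← pow_mul, ← pow_succ']
      rw [e1] at hd
      simpa using hd
    have hchoice : ∀ i : ℕ, ∃ w : WittVector p k, 1 ≤ i →
        a ^ p ^ i - (WittVector.frobenius a) ^ p ^ (i - 1) = (p : WittVector p k) ^ i * w := by
      intro i
      by_cases h : 1 ≤ i
      · obtain ⟨w, hw⟩ := hdvd i h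
        exact ⟨w, fun _ => hw⟩
      · exact ⟨0, fun hh => absurd hh h⟩
    choose d hd using hchoice
    refine ⟨fun i => if i = 0 then a else
      (⇑(WittVector.frobeniusEquiv p k).symm)^[i] (d i), by simp, ?_⟩
    intro i hi
    have hne : i ≠ 0 := by omega
    simp only [if_neg hne]
    rw [frob_iter_inv, ← hd i hi]
  · -- the V-series
    rintro c ⟨hc0, hc⟩
    -- telescoping identity
    have tele : ∀ m : ℕ,
        ∑ i ∈ Finset.range (m + 1),
            (p : WittVector p k) ^ i * (⇑(WittVector.frobenius))^[m] (c i) = a ^ p ^ m := by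
      intro m
      induction m with
      | zero => simp [hc0]
      | succ m ih =>
        rw [Finset.sum_range_succ]
        have e1 : ∑ i ∈ Finset.range (m + 1),
            (p : WittVector p k) ^ i * (⇑(WittVector.frobenius))^[m + 1] (c i)
            = WittVector.frobenius (∑ i ∈ Finset.range (m + 1),
                (p : WittVector p k) ^ i * (⇑(WittVector.frobenius))^[m] (c i)) := by
          rw [map_sum]
          refine Finset.sum_congr rfl fun i _ => ?_
          rw [Function.iterate_succ_apply', map_mul, map_pow, map_natCast]
        have hstep := hc (m + 1) (by omega)
        simp only [Nat.add_sub_cancel] at hstep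
        rw [e1, ih, map_pow, hstep]
        ring
      -- end
    intro n
    set T := WittVector.teichmuller p a
        - ∑ i ∈ Finset.range n, s (c i) * (⇑(WittVector.verschiebung))^[i] 1 with hT
    have hghost : ∀ m < n, WittVector.ghostComponent m T = 0 := by
      intro m hm
      have e2 : WittVector.ghostComponent m T
          = a ^ p ^ m - ∑ i ∈ Finset.range n,
              (if i ≤ m then (p : WittVector p k) ^ i * (⇑(WittVector.frobenius))^[m] (c i)
                else 0) := by
        rw [hT, map_sub, WittVector.ghostComponent_teichmuller, map_sum]
        congr 1
        refine Finset.sum_congr rfl fun i _ => ?_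
        rw [map_mul, hs, ghost_viter]
        by_cases h : i ≤ m
        · rw [if_pos h, if_pos h, map_one, mul_one]; ring
        · rw [if_neg h, if_neg h, mul_zero]
      have e3 : ∑ i ∈ Finset.range n,
          (if i ≤ m then (p : WittVector p k) ^ i * (⇑(WittVector.frobenius))^[m] (c i)
            else 0)
          = ∑ i ∈ Finset.range (m + 1),
              (p : WittVector p k) ^ i * (⇑(WittVector.frobenius))^[m] (c i) := by
        rw [← Finset.sum_subset (Finset.range_subset_range.mpr (by omega : m + 1 ≤ n))
          (fun x _ hx2 => if_neg (fun h : x ≤ m => hx2 (Finset.mem_range.mpr (Nat.lt_succ_of_le h))))]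
        refine Finset.sum_congr rfl fun i hi => ?_
        have := Finset.mem_range.mp hi
        rw [if_pos (by omega : i ≤ m)]
      rw [e2, e3, tele m, sub_self]
    obtain ⟨y, hy⟩ := shiftn n T (ghost_vanish_coeff T n hghost)
    exact ⟨y, hy⟩
end

section
/- Fix integers n ≥ 1 and i ≥ 1, and let tr_n : W(A) → W_n(A) denote truncation to length-n Witt vectors. There exists a unique ring homomorphism g : W_n(A) → A/p^iA such that g(tr_n(s_φ(a)·V^j(1))) = a·p^j + p^iA for every a ∈ A and every 0 ≤ j ≤ n−1. Moreover, g is surjective and its kernel is the ideal of W_n(A) generated by p^i·1 together with the elements tr_n(V^j(1)) − p^j·1 for 0 ≤ j ≤ n−1. -/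
open WittVector Finset Function

namespace Stmt4Aux

variable {p : ℕ} [hp : Fact p.Prime] {k : Type*} [CommRing k] [CharP k p] [PerfectRing k p]

theorem p_tf (x : WittVector p k) (h : (p : WittVector p k) * x = 0) : x = 0 := by
  have hv : verschiebung (frobenius x) = 0 := by
    rw [verschiebung_frobenius, mul_comm, h]
  have hfx : frobenius x = 0 := by
    ext m
    have := congrArg (fun w => WittVector.coeff w (m + 1)) hv
    simpa [verschiebung_coeff_succ] using this
  apply (frobenius_bijective p k).injective
  rw [hfx, map_zero]

theorem pow_tf (m : ℕ) (x : WittVector p k) (h : (p : WittVector p k) ^ m * x = 0) : x = 0 := by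
  induction m generalizing x with
  | zero => simpa using h
  | succ m ih =>
    refine p_tf x (ih _ ?_)
    rw [← mul_assoc, mul_comm ((p : WittVector p k) ^ m) ((p : WittVector p k)), ← pow_succ']
    exact h

theorem coeff_ghost (x y : WittVector p (WittVector p k)) :
    ∀ m : ℕ, (∀ l ≤ m, ghostComponent l x = ghostComponent l y) → x.coeff m = y.coeff m := by
  intro m
  induction m using Nat.strong_induction_on with
  | _ m ih =>
    intro h
    have hm := h m le_rfl
    rw [ghostComponent_apply, ghostComponent_apply, aeval_wittPolynomial,
      aeval_wittPolynomial, Finset.sum_range_succ, Finset.sum_range_succ] at hm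
    have hsum : ∑ l ∈ range m, (p : WittVector p k) ^ l * x.coeff l ^ p ^ (m - l)
        = ∑ l ∈ range m, (p : WittVector p k) ^ l * y.coeff l ^ p ^ (m - l) := by
      refine Finset.sum_congr rfl fun l hl => ?_
      rw [ih l (mem_range.mp hl) fun l' hl' => h l' (hl'.trans (mem_range.mp hl).le)]
    rw [hsum] at hm
    have hc : (p : WittVector p k) ^ m * x.coeff m = (p : WittVector p k) ^ m * y.coeff m := by
      have := add_left_cancel hm
      simpa using this
    have := pow_tf m (x.coeff m - y.coeff m) (by rw [mul_sub, hc, sub_self])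
    exact sub_eq_zero.mp this

theorem ghost_ext (x y : WittVector p (WittVector p k))
    (h : ∀ l, ghostComponent l x = ghostComponent l y) : x = y := by
  apply WittVector.ext
  intro m
  exact coeff_ghost x y m fun l _ => h l

theorem frob_s (s : WittVector p k →+* WittVector p (WittVector p k))
    (hs : ∀ (a : WittVector p k) (m : ℕ),
      ghostComponent m (s a) = (⇑(WittVector.frobenius))^[m] a) (a : WittVector p k) :
    frobenius (s a) = s (frobenius a) := by
  apply ghost_ext
  intro m
  rw [ghostComponent_frobenius, hs a (m + 1), hs (WittVector.frobenius a) m,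
    ← Function.iterate_succ_apply]

theorem iter_frob_s (s : WittVector p k →+* WittVector p (WittVector p k))
    (hs : ∀ (a : WittVector p k) (m : ℕ),
      ghostComponent m (s a) = (⇑(WittVector.frobenius))^[m] a) (a : WittVector p k) (j : ℕ) :
    (⇑(WittVector.frobenius))^[j] (s a) = s ((⇑(WittVector.frobenius))^[j] a) := by
  induction j with
  | zero => rfl
  | succ j ih =>
    rw [Function.iterate_succ_apply', Function.iterate_succ_apply', ih, frob_s s hs]

theorem s_mul_V (s : WittVector p k →+* WittVector p (WittVector p k))
    (hs : ∀ (a : WittVector p k) (m : ℕ),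
      ghostComponent m (s a) = (⇑(WittVector.frobenius))^[m] a) (b : WittVector p k) (j : ℕ) :
    s b * (⇑(verschiebung))^[j] (1 : WittVector p (WittVector p k))
      = (⇑(verschiebung))^[j] (s ((⇑(WittVector.frobenius))^[j] b)) := by
  rw [mul_comm, iterate_verschiebung_mul_left, one_mul, iter_frob_s s hs]

theorem ghost_zero_eq (z : WittVector p (WittVector p k)) :
    ghostComponent 0 z = z.coeff 0 := by
  rw [ghostComponent_apply, aeval_wittPolynomial]
  simp

theorem exists_V (z : WittVector p (WittVector p k)) (h : z.coeff 0 = 0) :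
    ∃ y, verschiebung y = z := by
  refine ⟨WittVector.mk p (fun m => z.coeff (m + 1)), ?_⟩
  apply WittVector.ext
  intro m
  cases m with
  | zero => rw [verschiebung_coeff_zero, h]
  | succ m => rw [verschiebung_coeff_succ, WittVector.coeff_mk]

theorem coeff_iterV_lt (z : WittVector p (WittVector p k)) :
    ∀ j i : ℕ, i < j → ((⇑(verschiebung))^[j] z).coeff i = 0 := by
  intro j
  induction j with
  | zero => intro i hi; omega
  | succ j ih =>
    intro i hi
    rw [Function.iterate_succ_apply']
    cases i with
    | zero => rw [verschiebung_coeff_zero]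
    | succ i => rw [verschiebung_coeff_succ]; exact ih i (by omega)

theorem ghost_iterV (z : WittVector p (WittVector p k)) (j m : ℕ) :
    ghostComponent (m + j) ((⇑(verschiebung))^[j] z)
      = (p : WittVector p k) ^ j * ghostComponent m z := by
  induction j with
  | zero => simp
  | succ j ih =>
    rw [Function.iterate_succ_apply', show m + (j + 1) = (m + j) + 1 from rfl,
      ghostComponent_verschiebung, ih, pow_succ]
    ring
set_option maxHeartbeats 1000000 in
theorem decompV (s : WittVector p k →+* WittVector p (WittVector p k))
    (hs : ∀ (a : WittVector p k) (m : ℕ),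
      ghostComponent m (s a) = (⇑(WittVector.frobenius))^[m] a) (nn : ℕ) :
    ∀ x : WittVector p (WittVector p k), ∃ (c : ℕ → WittVector p k)
      (z : WittVector p (WittVector p k)),
      x = (∑ j ∈ Finset.range nn, (⇑(verschiebung))^[j] (s (c j)))
        + (⇑(verschiebung))^[nn] z := by
  induction nn with
  | zero => intro x; exact ⟨0, x, by simp⟩
  | succ nn ih =>
    intro x
    set c0 : WittVector p k := ghostComponent 0 x with hc0
    have h0 : (x - s c0).coeff 0 = 0 := by
      rw [← ghost_zero_eq, map_sub, hs c0 0]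
      simp [hc0]
    obtain ⟨y, hy⟩ := exists_V _ h0
    obtain ⟨c, z, hz⟩ := ih y
    refine ⟨fun j => Nat.casesOn j c0 c, z, ?_⟩
    have hx : x = s c0 + verschiebung y := by rw [hy]; ring
    rw [hx, hz, map_add, map_sum, Finset.sum_range_succ']
    simp only [Function.iterate_succ_apply', Function.iterate_zero_apply]
    have hnr : (Nat.rec c0 (fun n _ => c n) 0 : WittVector p k) = c0 := rfl
    rw [hnr]
    ring
theorem span_lemma (s : WittVector p k →+* WittVector p (WittVector p k))
    (hs : ∀ (a : WittVector p k) (m : ℕ),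
      ghostComponent m (s a) = (⇑(WittVector.frobenius))^[m] a) (nn : ℕ)
    (x : TruncatedWittVector p nn (WittVector p k)) :
    ∃ b : ℕ → WittVector p k,
      x = ∑ j ∈ Finset.range nn,
        WittVector.truncate nn (s (b j) * (⇑(verschiebung))^[j] 1) := by
  obtain ⟨y, rfl⟩ := WittVector.truncate_surjective (p := p) nn (WittVector p k) x
  obtain ⟨c, z, rfl⟩ := decompV s hs nn y
  refine ⟨fun j => (⇑(frobeniusEquiv p k).symm)^[j] (c j), ?_⟩
  have hz : WittVector.truncate nn ((⇑(verschiebung))^[nn] z) = 0 := by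
    rw [← RingHom.mem_ker, WittVector.mem_ker_truncate]
    intro i hi
    exact coeff_iterV_lt z nn i hi
  rw [map_add, map_sum, hz, add_zero]
  refine Finset.sum_congr rfl fun j _ => ?_
  rw [s_mul_V s hs]
  have hl : Function.LeftInverse (⇑(WittVector.frobenius) : WittVector p k → WittVector p k)
      ⇑(frobeniusEquiv p k).symm := fun x => (frobeniusEquiv p k).apply_symm_apply x
  rw [hl.iterate j]
end Stmt4Aux
set_option maxHeartbeats 1000000 in
set_option synthInstance.maxHeartbeats 400000 in
open Stmt4Aux in
theorem stmt_4 (p : ℕ) [Fact p.Prime] (hp : Odd p)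
    (k : Type*) [CommRing k] [CharP k p] [PerfectRing k p]
    (s : WittVector p k →+* WittVector p (WittVector p k))
    (hs : ∀ (a : WittVector p k) (m : ℕ),
      WittVector.ghostComponent m (s a) = (⇑(WittVector.frobenius))^[m] a)
    (n i : ℕ) (hn : 1 ≤ n) (hi : 1 ≤ i) :
    (∃! g : TruncatedWittVector p n (WittVector p k) →+*
        (WittVector p k ⧸ Ideal.span {(p : WittVector p k) ^ i}),
      ∀ (a : WittVector p k) (j : ℕ), j ≤ n - 1 →
        g (WittVector.truncate n (s a * (⇑(WittVector.verschiebung))^[j] 1))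
          = Ideal.Quotient.mk (Ideal.span {(p : WittVector p k) ^ i}) (a * (p : WittVector p k) ^ j)) ∧
    (∀ g : TruncatedWittVector p n (WittVector p k) →+*
        (WittVector p k ⧸ Ideal.span {(p : WittVector p k) ^ i}),
      (∀ (a : WittVector p k) (j : ℕ), j ≤ n - 1 →
        g (WittVector.truncate n (s a * (⇑(WittVector.verschiebung))^[j] 1))
          = Ideal.Quotient.mk (Ideal.span {(p : WittVector p k) ^ i}) (a * (p : WittVector p k) ^ j)) →
      Function.Surjective g ∧
        RingHom.ker g = Ideal.span
          ({(p : TruncatedWittVector p n (WittVector p k)) ^ i} ∪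
            (fun j : ℕ => WittVector.truncate n ((⇑(WittVector.verschiebung))^[j]
              (1 : WittVector p (WittVector p k)))
              - (p : TruncatedWittVector p n (WittVector p k)) ^ j) '' {j | j ≤ n - 1})) := by
  classical
  set I : Ideal (WittVector p k) := Ideal.span {(p : WittVector p k) ^ i} with hI
  -- Existence of g
  have EX : ∃ g : TruncatedWittVector p n (WittVector p k) →+* (WittVector p k ⧸ I),
      ∀ (a : WittVector p k) (j : ℕ), j ≤ n - 1 →
        g (WittVector.truncate n (s a * (⇑(WittVector.verschiebung))^[j] 1))
          = Ideal.Quotient.mk I (a * (p : WittVector p k) ^ j) := by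
    let ψ : WittVector p k →+* WittVector p k := ((frobeniusEquiv p k).symm.toRingHom) ^ (n - 1)
    have hψ : ⇑ψ = (⇑(frobeniusEquiv p k).symm)^[n - 1] := RingHom.coe_pow _ _
    let f : WittVector p (WittVector p k) →+* (WittVector p k ⧸ I) :=
      (Ideal.Quotient.mk I).comp (ψ.comp (WittVector.ghostComponent (n - 1)))
    have hker : RingHom.ker (WittVector.truncate (p := p) n (R := WittVector p k))
        ≤ RingHom.ker f := by
      intro x hx
      rw [WittVector.mem_ker_truncate] at hx
      rw [RingHom.mem_ker]
      have hg0 : WittVector.ghostComponent (n - 1) x = 0 := by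
        rw [WittVector.ghostComponent_apply, aeval_wittPolynomial]
        refine Finset.sum_eq_zero fun l hl => ?_
        have hln : l < n := by have := Finset.mem_range.mp hl; omega
        rw [hx l hln, zero_pow (pow_ne_zero _ (Nat.Prime.ne_zero Fact.out)), mul_zero]
      show (Ideal.Quotient.mk I) (ψ (WittVector.ghostComponent (n - 1) x)) = 0
      rw [hg0, map_zero, map_zero]
    let g : TruncatedWittVector p n (WittVector p k) →+* (WittVector p k ⧸ I) :=
      (WittVector.truncate (p := p) n).liftOfRightInverse
        (Function.surjInv (WittVector.truncate_surjective (p := p) n (WittVector p k)))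
        (Function.rightInverse_surjInv _) ⟨f, hker⟩
    have hgf : ∀ x, g (WittVector.truncate n x) = f x := fun x =>
      RingHom.liftOfRightInverse_comp_apply _ _ _ ⟨f, hker⟩ x
    refine ⟨g, fun a j hj => ?_⟩
    rw [hgf]
    have hgc : WittVector.ghostComponent (n - 1)
        (s a * (⇑(WittVector.verschiebung))^[j] 1)
        = (⇑(WittVector.frobenius))^[n - 1] a * (p : WittVector p k) ^ j := by
      rw [map_mul, hs]
      congr 1
      have hn1 : n - 1 = (n - 1 - j) + j := (Nat.sub_add_cancel hj).symm
      rw [hn1, ghost_iterV, map_one, mul_one]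
    show (Ideal.Quotient.mk I) (ψ (WittVector.ghostComponent (n - 1)
      (s a * (⇑(WittVector.verschiebung))^[j] 1))) = _
    rw [hgc, map_mul]
    have hψ1 : ψ ((⇑(WittVector.frobenius))^[n - 1] a) = a := by
      rw [hψ]
      have hr : Function.LeftInverse (⇑(frobeniusEquiv p k).symm)
          (⇑(WittVector.frobenius) : WittVector p k → WittVector p k) := fun x =>
        (frobeniusEquiv p k).symm_apply_apply x
      exact hr.iterate (n - 1) a
    rw [hψ1, map_pow, map_natCast]
  -- Uniqueness
  have UNIQ : ∀ g₁ g₂ : TruncatedWittVector p n (WittVector p k) →+* (WittVector p k ⧸ I),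
      (∀ (a : WittVector p k) (j : ℕ), j ≤ n - 1 →
        g₁ (WittVector.truncate n (s a * (⇑(WittVector.verschiebung))^[j] 1))
          = Ideal.Quotient.mk I (a * (p : WittVector p k) ^ j)) →
      (∀ (a : WittVector p k) (j : ℕ), j ≤ n - 1 →
        g₂ (WittVector.truncate n (s a * (⇑(WittVector.verschiebung))^[j] 1))
          = Ideal.Quotient.mk I (a * (p : WittVector p k) ^ j)) → g₁ = g₂ := by
    intro g₁ g₂ h₁ h₂
    refine RingHom.ext fun x => ?_
    obtain ⟨b, rfl⟩ := span_lemma s hs n x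
    rw [map_sum, map_sum]
    refine Finset.sum_congr rfl fun j hj => ?_
    have hj' : j ≤ n - 1 := by have := Finset.mem_range.mp hj; omega
    rw [h₁ _ j hj', h₂ _ j hj']
  -- Surjectivity and kernel
  have MAIN : ∀ g : TruncatedWittVector p n (WittVector p k) →+* (WittVector p k ⧸ I),
      (∀ (a : WittVector p k) (j : ℕ), j ≤ n - 1 →
        g (WittVector.truncate n (s a * (⇑(WittVector.verschiebung))^[j] 1))
          = Ideal.Quotient.mk I (a * (p : WittVector p k) ^ j)) →
      Function.Surjective g ∧
        RingHom.ker g = Ideal.span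
          ({(p : TruncatedWittVector p n (WittVector p k)) ^ i} ∪
            (fun j : ℕ => WittVector.truncate n ((⇑(WittVector.verschiebung))^[j]
              (1 : WittVector p (WittVector p k)))
              - (p : TruncatedWittVector p n (WittVector p k)) ^ j) '' {j | j ≤ n - 1}) := by
    intro g hg
    have hgp : ∀ m : ℕ, g ((p : TruncatedWittVector p n (WittVector p k)) ^ m)
        = Ideal.Quotient.mk I ((p : WittVector p k) ^ m) := by
      intro m
      rw [map_pow, map_natCast, ← map_natCast (Ideal.Quotient.mk I), ← map_pow]
    constructor
    · intro q
      obtain ⟨a, rfl⟩ := Ideal.Quotient.mk_surjective q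
      refine ⟨WittVector.truncate n (s a * (⇑(WittVector.verschiebung))^[0] 1), ?_⟩
      have := hg a 0 (by omega)
      simpa using this
    · apply le_antisymm
      · -- ker g ⊆ span
        intro x hx
        obtain ⟨b, rfl⟩ := span_lemma s hs n x
        rw [RingHom.mem_ker, map_sum] at hx
        have hterm : ∀ j ∈ Finset.range n,
            g (WittVector.truncate n (s (b j) * (⇑(WittVector.verschiebung))^[j] 1))
              = Ideal.Quotient.mk I (b j * (p : WittVector p k) ^ j) := fun j hj =>
          hg (b j) j (by have := Finset.mem_range.mp hj; omega)
        have hS : Ideal.Quotient.mk I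
            (∑ j ∈ Finset.range n, b j * (p : WittVector p k) ^ j) = 0 := by
          rw [map_sum, ← Finset.sum_congr rfl hterm, hx]
        obtain ⟨cc, hcc⟩ := Ideal.mem_span_singleton.mp
          (hI ▸ Ideal.Quotient.eq_zero_iff_mem.mp hS)
        have h1 : WittVector.truncate (p := p) n
            (s (∑ j ∈ Finset.range n, b j * (p : WittVector p k) ^ j))
            = ∑ j ∈ Finset.range n, WittVector.truncate n (s (b j))
              * (p : TruncatedWittVector p n (WittVector p k)) ^ j := by
          rw [map_sum, map_sum]
          refine Finset.sum_congr rfl fun j _ => ?_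
          simp only [map_mul, map_pow, map_natCast]
        have hsplit : (∑ j ∈ Finset.range n,
              WittVector.truncate n (s (b j) * (⇑(WittVector.verschiebung))^[j] 1))
            = (∑ j ∈ Finset.range n, WittVector.truncate n (s (b j)) *
                (WittVector.truncate n ((⇑(WittVector.verschiebung))^[j]
                  (1 : WittVector p (WittVector p k)))
                  - (p : TruncatedWittVector p n (WittVector p k)) ^ j))
              + WittVector.truncate n
                (s (∑ j ∈ Finset.range n, b j * (p : WittVector p k) ^ j)) := by
          rw [h1, ← Finset.sum_add_distrib]
          refine Finset.sum_congr rfl fun j _ => ?_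
          rw [map_mul]
          ring
        rw [hsplit]
        apply Ideal.add_mem
        · refine Ideal.sum_mem _ fun j hj => ?_
          refine Ideal.mul_mem_left _ _ (Ideal.subset_span ?_)
          exact Set.mem_union_right _
            ⟨j, by show j ≤ n - 1; have := Finset.mem_range.mp hj; omega, rfl⟩
        · rw [hcc]
          have : WittVector.truncate (p := p) n (s ((p : WittVector p k) ^ i * cc))
              = (p : TruncatedWittVector p n (WittVector p k)) ^ i
                * WittVector.truncate n (s cc) := by
            simp only [map_mul, map_pow, map_natCast]
          rw [this]
          exact Ideal.mul_mem_right _ _ (Ideal.subset_span (Set.mem_union_left _ rfl))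
      · -- span ⊆ ker g
        rw [Ideal.span_le]
        rintro t (rfl | ⟨j, hj, rfl⟩)
        · show _ ∈ RingHom.ker g
          rw [RingHom.mem_ker, hgp i, Ideal.Quotient.eq_zero_iff_mem, hI]
          exact Ideal.subset_span rfl
        · show _ ∈ RingHom.ker g
          rw [RingHom.mem_ker, map_sub, hgp j]
          have h1 : WittVector.truncate (p := p) n
              ((⇑(WittVector.verschiebung))^[j] (1 : WittVector p (WittVector p k)))
              = WittVector.truncate n (s 1 * (⇑(WittVector.verschiebung))^[j] 1) := by
            rw [map_one, one_mul]
          rw [h1, hg 1 j hj, one_mul, sub_self]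
  refine ⟨?_, fun g hgg => MAIN g hgg⟩
  obtain ⟨g, hg⟩ := EX
  exact ⟨g, hg, fun g' hg' => UNIQ g' g hg' hg⟩
end

section
/- Let p be an odd prime and k a perfect commutative ring of characteristic p. Then multiplication by p on Ω¹_{W(k)}, i.e., the map Ω¹_{W(k)} → Ω¹_{W(k)} sending ω to p·ω, is a bijection. -/
/-!
Since `W(k)` is `p`-torsion free and its Frobenius `φ` reduces to `x ↦ x ^ p` modulo `p`, there is a
unique `c` with `φ x = x ^ p + p * c x`. The expression `x ^ (p - 1) dx + d(c x)` is then a formal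
`p⁻¹ d(φ x)`; it is additive and satisfies the Leibniz rule twisted by `φ`, so precomposing it with
`φ⁻¹` gives a derivation `θ` of `W(k)` with `p • θ = d`. Its linear extension `L : Ω → Ω` satisfies
`p • L = id` and commutes with `p`, hence inverts multiplication by `p`.

The twisted Leibniz rule and additivity are identities between polynomials in `x, y, c x, c y`:
after multiplication by `p` they hold in the Kähler differentials of a polynomial ring over `ℤ`,
which are torsion free, so they hold there and hence everywhere.
-/

namespace KaehlerDifferential

instance (σ : Type*) : IsAddTorsionFree Ω[MvPolynomial σ ℤ⁄ℤ] :=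
  Function.Injective.isAddTorsionFree (mvPolynomialBasis ℤ σ).repr.toAddMonoidHom
    (mvPolynomialBasis ℤ σ).repr.injective

section MapOfAlgHom

variable {R A B : Type*} [CommRing R] [CommRing A] [CommRing B] [Algebra R A] [Algebra R B]

noncomputable def mapOfAlgHom (f : B →ₐ[R] A) : Ω[B⁄R] →ₗ[R] Ω[A⁄R] :=
  letI := f.toAlgebra
  (map R R B A).restrictScalars R

theorem mapOfAlgHom_D (f : B →ₐ[R] A) (b : B) : mapOfAlgHom f (D R B b) = D R A (f b) :=
  letI := f.toAlgebra
  map_D R R B A b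

theorem mapOfAlgHom_smul (f : B →ₐ[R] A) (b : B) (ω : Ω[B⁄R]) :
    mapOfAlgHom f (b • ω) = f b • mapOfAlgHom f ω :=
  letI := f.toAlgebra
  ((map R R B A).map_smul b ω).trans (algebraMap_smul A b _)

end MapOfAlgHom

/-- Stands for `p⁻¹ d(x ^ p + p * y)`, see `nsmul_frobeniusDiff`. -/
noncomputable def frobeniusDiff (R : Type*) {A : Type*} [CommRing R] [CommRing A] [Algebra R A]
    (p : ℕ) (x y : A) : Ω[A⁄R] :=
  x ^ (p - 1) • D R A x + D R A y

section FrobeniusDiff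

variable {R A B : Type*} [CommRing R] [CommRing A] [CommRing B] [Algebra R A] [Algebra R B]
  {p : ℕ}

theorem nsmul_frobeniusDiff (p : ℕ) (x y : A) :
    p • frobeniusDiff R p x y = D R A (x ^ p + p * y) := by
  rw [frobeniusDiff, map_add, Derivation.leibniz_pow, Derivation.leibniz, Derivation.map_natCast,
    smul_zero, add_zero, smul_add, Nat.cast_smul_eq_nsmul]

theorem frobeniusDiff_add_right (x y z : A) :
    frobeniusDiff R p x (y + z) = frobeniusDiff R p x y + D R A z := by
  rw [frobeniusDiff, frobeniusDiff, map_add, add_assoc]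

theorem mapOfAlgHom_frobeniusDiff (f : B →ₐ[R] A) (x y : B) :
    mapOfAlgHom f (frobeniusDiff R p x y) = frobeniusDiff R p (f x) (f y) := by
  simp only [frobeniusDiff, map_add, mapOfAlgHom_smul, mapOfAlgHom_D, map_pow]

theorem frobeniusDiff_mul (hp : p ≠ 0) (a b s t : A) :
    frobeniusDiff ℤ p (a * b) (a ^ p * t + b ^ p * s + p * (s * t)) =
      (a ^ p + p * s) • frobeniusDiff ℤ p b t + (b ^ p + p * t) • frobeniusDiff ℤ p a s := by
  let X : Fin 4 → MvPolynomial (Fin 4) ℤ := MvPolynomial.X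
  have universal :
      frobeniusDiff ℤ p (X 0 * X 1) (X 0 ^ p * X 3 + X 1 ^ p * X 2 + p * (X 2 * X 3)) =
        (X 0 ^ p + p * X 2) • frobeniusDiff ℤ p (X 1) (X 3) +
          (X 1 ^ p + p * X 3) • frobeniusDiff ℤ p (X 0) (X 2) := by
    refine nsmul_right_injective hp ?_
    simp only [smul_add, smul_comm p, nsmul_frobeniusDiff, ← Derivation.leibniz]
    congr 1
    ring
  simpa [X, mapOfAlgHom_frobeniusDiff, mapOfAlgHom_smul] using
    congrArg (mapOfAlgHom (MvPolynomial.aeval ![a, b, s, t])) universal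

theorem exists_frobeniusDiff_add (hp : p.Prime) (a b : A) :
    ∃ u : A, (a + b) ^ p = a ^ p + b ^ p + p * u ∧
      frobeniusDiff ℤ p (a + b) (-u) = frobeniusDiff ℤ p a 0 + frobeniusDiff ℤ p b 0 := by
  let X : Fin 2 → MvPolynomial (Fin 2) ℤ := MvPolynomial.X
  obtain ⟨r, hr⟩ := exists_add_pow_prime_eq hp (X 0) (X 1)
  have universal : frobeniusDiff ℤ p (X 0 + X 1) (-(X 0 * X 1 * r)) =
      frobeniusDiff ℤ p (X 0) 0 + frobeniusDiff ℤ p (X 1) 0 := by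
    refine nsmul_right_injective hp.ne_zero ?_
    simp only [smul_add, nsmul_frobeniusDiff, ← map_add, hr]
    congr 1
    ring
  let f := MvPolynomial.aeval (R := ℤ) ![a, b]
  refine ⟨f (X 0 * X 1 * r), ?_, ?_⟩
  · simpa [X, f, mul_assoc] using congrArg f hr
  · simpa [X, f, mapOfAlgHom_frobeniusDiff] using congrArg (mapOfAlgHom f) universal

end FrobeniusDiff

section FrobeniusLift

variable {p : ℕ} {A : Type*} [CommRing A] {c : A → A}

theorem frobeniusDiff_mul_of_eq_pow_add {φ : A →+* A} (hp : p ≠ 0)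
    (hreg : IsLeftRegular (p : A)) (hc : ∀ x, φ x = x ^ p + p * c x) (a b : A) :
    frobeniusDiff ℤ p (a * b) (c (a * b)) =
      φ a • frobeniusDiff ℤ p b (c b) + φ b • frobeniusDiff ℤ p a (c a) := by
  have h := hc (a * b)
  rw [map_mul, hc a, hc b] at h
  have hcab : c (a * b) = a ^ p * c b + b ^ p * c a + p * (c a * c b) :=
    hreg (by linear_combination -h - mul_pow a b p)
  rw [hcab, hc a, hc b]
  exact frobeniusDiff_mul hp a b (c a) (c b)

theorem frobeniusDiff_add_of_eq_pow_add {φ : A →+* A} (hp : p.Prime)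
    (hreg : IsLeftRegular (p : A)) (hc : ∀ x, φ x = x ^ p + p * c x) (a b : A) :
    frobeniusDiff ℤ p (a + b) (c (a + b)) =
      frobeniusDiff ℤ p a (c a) + frobeniusDiff ℤ p b (c b) := by
  obtain ⟨u, hu, hdu⟩ := exists_frobeniusDiff_add hp a b
  have h := hc (a + b)
  rw [map_add, hc a, hc b] at h
  have hcab : c (a + b) = -u + (c a + c b) := hreg (by linear_combination -h - hu)
  rw [hcab, frobeniusDiff_add_right, hdu]
  simp only [frobeniusDiff, map_add, map_zero, add_zero]
  abel

/-- The derivation `x ↦ p⁻¹ d(x)`, computed as `p⁻¹ d(φ y)` for `y = φ⁻¹ x`. -/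
noncomputable def frobeniusLiftDerivation (hp : p.Prime) (hreg : IsLeftRegular (p : A))
    (φ : A ≃+* A) (hc : ∀ x, φ x = x ^ p + p * c x) : Derivation ℤ A Ω[A⁄ℤ] :=
  Derivation.mk'
    (AddMonoidHom.mk' (fun x => frobeniusDiff ℤ p (φ.symm x) (c (φ.symm x))) fun a b => by
      rw [map_add]
      exact frobeniusDiff_add_of_eq_pow_add (φ := φ.toRingHom) hp hreg hc _ _).toIntLinearMap
    fun a b => by
      simpa using frobeniusDiff_mul_of_eq_pow_add (φ := φ.toRingHom) hp.ne_zero hreg hc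
        (φ.symm a) (φ.symm b)

theorem nsmul_frobeniusLiftDerivation (hp : p.Prime) (hreg : IsLeftRegular (p : A))
    (φ : A ≃+* A) (hc : ∀ x, φ x = x ^ p + p * c x) (x : A) :
    p • frobeniusLiftDerivation hp hreg φ hc x = D ℤ A x := by
  simp [frobeniusLiftDerivation, nsmul_frobeniusDiff, ← hc]

theorem bijective_nsmul_of_frobeniusLift (hp : p.Prime) (hreg : IsLeftRegular (p : A))
    (φ : A ≃+* A) (hφ : ∀ x, (p : A) ∣ φ x - x ^ p) :
    Function.Bijective (fun ω : Ω[A⁄ℤ] => p • ω) := by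
  choose c hc using hφ
  set L := (frobeniusLiftDerivation hp hreg φ (c := c)
    fun x => by linear_combination hc x).liftKaehlerDifferential
  have hL : ∀ ω, p • L ω = ω := by
    suffices p • L = LinearMap.id from fun ω => LinearMap.congr_fun this ω
    refine LinearMap.ext_on (span_range_derivation ℤ A) ?_
    rintro _ ⟨x, rfl⟩
    simp [L, nsmul_frobeniusLiftDerivation]
  refine Function.bijective_iff_has_inverse.mpr ⟨L, fun ω => ?_, hL⟩
  simp only [map_nsmul, hL]

end FrobeniusLift

end KaehlerDifferential

namespace WittVector

variable {p : ℕ} [Fact p.Prime] {k : Type*} [CommRing k] [CharP k p] [PerfectRing k p]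

theorem isLeftRegular_natCast_p : IsLeftRegular (p : WittVector p k) := fun x y h =>
  sub_eq_zero.mp <| eq_zero_of_p_mul_eq_zero _ <| by
    rw [sub_mul, mul_comm x, mul_comm y]
    exact sub_eq_zero.mpr h

theorem natCast_p_dvd_frobenius_sub_pow (x : WittVector p k) :
    (p : WittVector p k) ∣ frobenius x - x ^ p := by
  rw [← Ideal.mem_span_singleton, ← ker_constantCoeff, RingHom.mem_ker, map_sub, map_pow,
    constantCoeff_apply, constantCoeff_apply, coeff_frobenius_charP, sub_self]

end WittVector

theorem stmt_5_general (p : ℕ) [Fact p.Prime]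
    (k : Type*) [CommRing k] [CharP k p] [PerfectRing k p] :
    Function.Bijective (fun ω : Ω[WittVector p k⁄ℤ] => p • ω) :=
  KaehlerDifferential.bijective_nsmul_of_frobeniusLift Fact.out WittVector.isLeftRegular_natCast_p
    (WittVector.frobeniusEquiv p k) WittVector.natCast_p_dvd_frobenius_sub_pow

theorem stmt_5 (p : ℕ) [Fact p.Prime] (hp : Odd p)
    (k : Type*) [CommRing k] [CharP k p] [PerfectRing k p] :
    Function.Bijective (fun ω : Ω[WittVector p k⁄ℤ] => p • ω) :=
  stmt_5_general p k
end

section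
/- Let p be an odd prime and let i ≥ 1 and j be integers with 1 ≤ j ≤ p^{i−1}. Then p^j·C(p^i, j) ≡ p^{j+1}·C(p^{i−1}, j) (mod p^{2i+1}), where C(m, r) denotes the binomial coefficient. -/
/-- `(j+1) * C(n, j+1) = (n - j) * C(n, j)` as integers. -/
private lemma choose_rec_int (n j : ℕ) :
    ((j : ℤ) + 1) * (n.choose (j + 1) : ℤ) = ((n : ℤ) - (j : ℤ)) * (n.choose j : ℤ) := by
  rcases le_or_gt j n with h | h
  · have e : n.choose (j + 1) * (j + 1) = n.choose j * (n - j) := Nat.choose_succ_right_eq n j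
    zify [h] at e
    linarith
  · rw [Nat.choose_eq_zero_of_lt h, Nat.choose_eq_zero_of_lt (h.trans (Nat.lt_succ_self j))]
    push_cast
    ring

/-- `p^(i-1)` divides `j! * C(p^(i-1), j)` for `j ≥ 1`. -/
private lemma aux_dvd (p : ℕ) (hp : p.Prime) (i j : ℕ) (hj : 1 ≤ j) :
    p ^ (i - 1) ∣ j.factorial * (p ^ (i - 1)).choose j := by
  have hpos : 0 < p ^ (i - 1) := pow_pos hp.pos _
  have e := Nat.add_one_mul_choose_eq (p ^ (i - 1) - 1) (j - 1)
  rw [Nat.sub_add_cancel hpos, Nat.sub_add_cancel hj] at e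
  -- e : p^(i-1) * (p^(i-1)-1).choose (j-1) = (p^(i-1)).choose j * j
  have h1 : p ^ (i - 1) ∣ (p ^ (i - 1)).choose j * j := ⟨_, e.symm⟩
  have h2 : (p ^ (i - 1)).choose j * j ∣ j.factorial * (p ^ (i - 1)).choose j := by
    rw [mul_comm]
    exact mul_dvd_mul_right (Nat.dvd_factorial hj le_rfl) _
  exact h1.trans h2

private lemma key (p : ℕ) (hp : p.Prime) (i : ℕ) (hi : 1 ≤ i) :
    ∀ j, 1 ≤ j → (p : ℤ) ^ (2 * i - 1 + j) ∣
      (j.factorial : ℤ) *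
        ((p : ℤ) ^ j * ((p ^ i).choose j : ℤ) - (p : ℤ) ^ (j + 1) * ((p ^ (i - 1)).choose j : ℤ)) := by
  intro j hj
  induction j, hj using Nat.le_induction with
  | base =>
    have h1 : (p : ℤ) ^ 1 * (p : ℤ) ^ i = (p : ℤ) ^ 2 * (p : ℤ) ^ (i - 1) := by
      rw [← pow_add, ← pow_add]
      congr 1
      omega
    simp only [Nat.choose_one_right]
    push_cast
    rw [show ((p:ℤ)^1 * (p:ℤ)^i - (p:ℤ)^(1+1) * (p:ℤ)^(i-1)) = 0 by
      rw [show (1+1) = 2 from rfl]; linarith]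
    simp
  | succ j hj ih =>
    have r1 := choose_rec_int (p ^ i) j
    have r2 := choose_rec_int (p ^ (i - 1)) j
    push_cast at r1 r2
    have hA : (p : ℤ) ^ (i - 1) ∣ (j.factorial : ℤ) * ((p ^ (i - 1)).choose j : ℤ) := by
      have := aux_dvd p hp i j hj
      exact_mod_cast Int.natCast_dvd_natCast.mpr this
    have main : (((j + 1).factorial : ℤ)) *
        ((p : ℤ) ^ (j + 1) * ((p ^ i).choose (j + 1) : ℤ)
          - (p : ℤ) ^ (j + 1 + 1) * ((p ^ (i - 1)).choose (j + 1) : ℤ))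
        = (p : ℤ) * ((p : ℤ) ^ i - (j : ℤ)) *
            ((j.factorial : ℤ) *
              ((p : ℤ) ^ j * ((p ^ i).choose j : ℤ)
                - (p : ℤ) ^ (j + 1) * ((p ^ (i - 1)).choose j : ℤ)))
          + (p : ℤ) ^ (j + 2) * ((p : ℤ) ^ i - (p : ℤ) ^ (i - 1)) *
              ((j.factorial : ℤ) * ((p ^ (i - 1)).choose j : ℤ)) := by
      rw [Nat.factorial_succ]
      push_cast
      linear_combination ((j.factorial : ℤ)) * (p : ℤ) ^ (j + 1) * r1
        - ((j.factorial : ℤ)) * (p : ℤ) ^ (j + 2) * r2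
    rw [main]
    apply dvd_add
    · have he : 2 * i - 1 + (j + 1) = 1 + (2 * i - 1 + j) := by omega
      rw [he, pow_add, pow_one, mul_assoc]
      exact mul_dvd_mul_left _ (ih.mul_left _)
    · have he : 2 * i - 1 + (j + 1) = (j + 2) + (i - 1) + (i - 1) := by omega
      rw [he, pow_add, pow_add]
      refine mul_dvd_mul (mul_dvd_mul dvd_rfl ?_) hA
      exact dvd_sub (pow_dvd_pow _ (by omega)) dvd_rfl

theorem stmt_10 (p : ℕ) (hp : p.Prime) (hodd : Odd p)
    (i j : ℕ) (hi : 1 ≤ i) (hj1 : 1 ≤ j) (hj2 : j ≤ p ^ (i - 1)) :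
    (p : ℤ) ^ j * ((p ^ i).choose j : ℤ)
      ≡ (p : ℤ) ^ (j + 1) * ((p ^ (i - 1)).choose j : ℤ) [ZMOD (p : ℤ) ^ (2 * i + 1)] := by
  have hp3 : 3 ≤ p := by
    have h2 := hp.two_le
    rcases Nat.lt_or_ge p 3 with h | h
    · interval_cases p
      · exact absurd hodd (by decide)
    · exact h
  rcases eq_or_lt_of_le hj1 with h1 | h2
  · -- j = 1
    subst h1
    have : (p : ℤ) ^ 1 * ((p ^ i).choose 1 : ℤ)
        = (p : ℤ) ^ (1 + 1) * ((p ^ (i - 1)).choose 1 : ℤ) := by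
      simp only [Nat.choose_one_right]
      push_cast
      rw [← pow_add, ← pow_add]
      congr 1
      omega
    rw [this]
  · -- j ≥ 2
    have hj2' : 2 ≤ j := h2
    set v := (j.factorial).factorization p with hv
    have hple : 1 ≤ p - 1 := by omega
    -- v ≤ j - 2
    have hvle : v ≤ j - 2 := by
      haveI : Fact p.Prime := ⟨hp⟩
      have hleg : (p - 1) * padicValNat p (j.factorial) = j - (p.digits j).sum :=
        sub_one_mul_padicValNat_factorial j
      have hsum : 1 ≤ (p.digits j).sum := by
        have hne : p.digits j ≠ [] := Nat.digits_ne_nil_iff_ne_zero.mpr (by omega)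
        have hlast := Nat.getLast_digit_ne_zero p (show j ≠ 0 by omega)
        have hmem : (p.digits j).getLast hne ∈ p.digits j := List.getLast_mem hne
        calc 1 ≤ (p.digits j).getLast hne := Nat.one_le_iff_ne_zero.mpr hlast
          _ ≤ (p.digits j).sum := List.single_le_sum (fun x _ => Nat.zero_le x) _ hmem
      have hveq : v = padicValNat p (j.factorial) := by
        rw [hv, Nat.factorization_def _ hp]
      have : (p - 1) * v ≤ j - 1 := by
        rw [hveq, hleg]; omega
      have h2v : 2 * v ≤ j - 1 := le_trans (mul_le_mul_left (by omega : (2:ℕ) ≤ p - 1) v) this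
      omega
    have d := key p hp i hi j hj1
    set D : ℤ := (p : ℤ) ^ j * ((p ^ i).choose j : ℤ)
      - (p : ℤ) ^ (j + 1) * ((p ^ (i - 1)).choose j : ℤ) with hD
    set u : ℕ := j.factorial / p ^ v with hu
    have hfac : j.factorial = p ^ v * u := (Nat.ordProj_mul_ordCompl_eq_self j.factorial p).symm
    have hnd : ¬ p ∣ u := Nat.not_dvd_ordCompl hp (Nat.factorial_ne_zero j)
    have hw : 2 * i - 1 + j = v + (2 * i - 1 + j - v) := by omega
    have d2 : (p : ℤ) ^ v * (p : ℤ) ^ (2 * i - 1 + j - v) ∣ (p : ℤ) ^ v * ((u : ℤ) * D) := by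
      rw [← pow_add, ← hw]
      have : (j.factorial : ℤ) = (p : ℤ) ^ v * (u : ℤ) := by exact_mod_cast congrArg (Nat.cast (R := ℤ)) hfac
      rw [← mul_assoc, ← this]
      exact d
    have d3 : (p : ℤ) ^ (2 * i - 1 + j - v) ∣ (u : ℤ) * D :=
      (mul_dvd_mul_iff_left (a := (p : ℤ) ^ v)
        (pow_ne_zero _ (by exact_mod_cast hp.ne_zero))).mp d2
    have hpint : Prime (p : ℤ) := Int.prime_iff_natAbs_prime.mpr (by simpa using hp)
    have hndi : ¬ (p : ℤ) ∣ (u : ℤ) := fun h => hnd (Int.natCast_dvd_natCast.mp h)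
    have d4 : (p : ℤ) ^ (2 * i - 1 + j - v) ∣ D :=
      hpint.pow_dvd_of_dvd_mul_left _ hndi d3
    have d5 : (p : ℤ) ^ (2 * i + 1) ∣ D :=
      (pow_dvd_pow _ (by omega)).trans d4
    exact (Int.ModEq.symm (Int.modEq_iff_dvd.mpr d5))
end

section
/- Let p be an odd prime and let i ≥ 1 and j be integers with p^{i−1} + 1 ≤ j ≤ p^i. Then p^{2i+1} divides p^j·C(p^i, j), where C(m, r) denotes the binomial coefficient. -/
/-!
By Kummer's theorem `v_p(C(p^i, j)) = i - v_p(j)` for `0 < j ≤ p^i`, so it suffices that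
`j + i - v_p(j) ≥ 2i + 1`. Since `p^{v_p(j)} ≤ j`, this follows from `2n + 1 ≤ p^n`
(Bernoulli, as `p ≥ 3`): if `v_p(j) = i` then `j ≥ p^i ≥ 2i + 1`, and otherwise
`i + v_p(j) ≤ 2(i - 1) + 1 ≤ p^{i-1} < j`.
-/

lemma two_mul_add_one_le_pow {b : ℕ} (hb : 3 ≤ b) (n : ℕ) : 2 * n + 1 ≤ b ^ n :=
  calc 2 * n + 1 = 1 + n * 2 := by ring
    _ ≤ (1 + 2) ^ n := one_add_le_pow_of_two_add_nonneg (by norm_num) n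
    _ ≤ b ^ n := Nat.pow_le_pow_left hb n

lemma Nat.Prime.pow_sub_factorization_dvd_choose_prime_pow {p i j : ℕ} (hp : p.Prime)
    (hj : j ≤ p ^ i) (hj0 : j ≠ 0) : p ^ (i - j.factorization p) ∣ (p ^ i).choose j := by
  rw [← Nat.factorization_choose_prime_pow hp hj hj0]
  exact Nat.ordProj_dvd _ p

lemma add_factorization_lt_of_pow_pred_lt {p i j : ℕ} (hp : 3 ≤ p) (hj1 : p ^ (i - 1) < j)
    (hj2 : j ≤ p ^ i) :
    i + j.factorization p < j := by
  set v := j.factorization p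
  have hvj : p ^ v ≤ j := Nat.ordProj_le p (by omega)
  have hvi : v ≤ i := (Nat.pow_le_pow_iff_right (by omega)).mp (hvj.trans hj2)
  rcases hvi.eq_or_lt with rfl | hlt
  · have := two_mul_add_one_le_pow hp v
    omega
  · have := two_mul_add_one_le_pow hp (i - 1)
    omega

theorem stmt_11_general (p : ℕ) (hp : p.Prime) (hodd : Odd p)
    (i j : ℕ) (hj1 : p ^ (i - 1) + 1 ≤ j) (hj2 : j ≤ p ^ i) :
    (p : ℤ) ^ (2 * i + 1) ∣ (p : ℤ) ^ j * ((p ^ i).choose j : ℤ) := by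
  have hchoose := hp.pow_sub_factorization_dvd_choose_prime_pow hj2 (by omega)
  have hlt := add_factorization_lt_of_pow_pred_lt (hp.odd_iff.mp hodd) hj1 hj2
  have hdvd : p ^ (2 * i + 1) ∣ p ^ j * (p ^ i).choose j :=
    calc p ^ (2 * i + 1) ∣ p ^ (j + (i - j.factorization p)) := pow_dvd_pow p (by omega)
      _ = p ^ j * p ^ (i - j.factorization p) := pow_add _ _ _
      _ ∣ p ^ j * (p ^ i).choose j := mul_dvd_mul_left _ hchoose
  exact_mod_cast hdvd

theorem stmt_11 (p : ℕ) (hp : p.Prime) (hodd : Odd p)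
    (i j : ℕ) (hi : 1 ≤ i) (hj1 : p ^ (i - 1) + 1 ≤ j) (hj2 : j ≤ p ^ i) :
    (p : ℤ) ^ (2 * i + 1) ∣ (p : ℤ) ^ j * ((p ^ i).choose j : ℤ) :=
  stmt_11_general p hp hodd i j hj1 hj2
end

section
/- Let a ∈ A and suppose the sequence (c_j) in A satisfies [a] = Σ_{j=0}^∞ s_φ(c_j)·V^j(1) in W(A). Then for every i ≥ 0, a^{p^i} = Σ_{j=0}^{i} φ^i(c_j)·p^j in A. -/
open WittVector

lemma ghost_iter_versch (p : ℕ) [Fact p.Prime] {R : Type*} [CommRing R]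
    (m : ℕ) (y : WittVector p R) :
    ∀ n < m, WittVector.ghostComponent n ((⇑(WittVector.verschiebung))^[m] y) = 0 := by
  induction m with
  | zero => intro n hn; omega
  | succ m ih =>
    intro n hn
    rw [Function.iterate_succ_apply']
    cases n with
    | zero => exact WittVector.ghostComponent_zero_verschiebung _
    | succ n =>
      rw [WittVector.ghostComponent_verschiebung, ih n (by omega), mul_zero]

lemma ghost_iter_versch_one (p : ℕ) [Fact p.Prime] {R : Type*} [CommRing R]
    (j : ℕ) : ∀ n, j ≤ n →
    WittVector.ghostComponent n ((⇑(WittVector.verschiebung))^[j] (1 : WittVector p R))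
      = (p : R) ^ j := by
  induction j with
  | zero => intro n _; simp
  | succ j ih =>
    intro n hn
    obtain ⟨m, rfl⟩ : ∃ m, n = m + 1 := ⟨n - 1, by omega⟩
    rw [Function.iterate_succ_apply', WittVector.ghostComponent_verschiebung,
      ih m (by omega), pow_succ]
    ring

theorem stmt_12 (p : ℕ) [Fact p.Prime] (hp : Odd p)
    (k : Type*) [CommRing k] [CharP k p] [PerfectRing k p]
    (s : WittVector p k →+* WittVector p (WittVector p k))
    (hs : ∀ (a : WittVector p k) (n : ℕ),
      WittVector.ghostComponent n (s a) = (⇑(WittVector.frobenius))^[n] a)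
    (a : WittVector p k) (c : ℕ → WittVector p k)
    (hc : IsVSeries p s (WittVector.teichmuller p a) c) :
    ∀ i : ℕ, a ^ p ^ i
      = ∑ j ∈ Finset.range (i + 1),
          (⇑(WittVector.frobenius))^[i] (c j) * (p : WittVector p k) ^ j := by
  intro i
  obtain ⟨y, hy⟩ := hc (i + 1)
  have h := congrArg (WittVector.ghostComponent (p := p) i) hy
  rw [map_sub, map_sum, ghost_iter_versch p (i + 1) y i (by omega),
    WittVector.ghostComponent_teichmuller, sub_eq_zero] at h
  rw [h]
  refine Finset.sum_congr rfl fun j hj => ?_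
  rw [Finset.mem_range] at hj
  rw [map_mul, hs, ghost_iter_versch_one p j i (by omega)]
end

section
/- Fix an integer j ≥ 1, and let ι : Ω¹_A → Ω¹_A be the inverse of multiplication by p (so p·ι(ω) = ω and ι(p·ω) = ω for all ω ∈ Ω¹_A). Define, for x ∈ A and (α, a) ∈ Ω¹_A × A, the operation x • (α, a) := (φ^j(x)·α − ι^{∘j}(a·d(φ^j(x))), φ^j(x)·a). Then this operation, together with componentwise addition, makes Ω¹_A × A an A-module: for all x, x' ∈ A and all (α, a), (β, b) ∈ Ω¹_A × A one has 1 • (α, a) = (α, a), (x·x') • (α, a) = x • (x' • (α, a)), x • ((α, a) + (β, b)) = x • (α, a) + x • (β, b), and (x + x') • (α, a) = x • (α, a) + x' • (α, a). Moreover the map h_j : A → Ω¹_A × A defined by h_j(a) = (−d(a), p^j·a) is additive and satisfies h_j(φ^j(x)·a) = x • h_j(a) for all x, a ∈ A. -/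
open WittVector

section aux
variable {R M : Type*} [CommRing R] [AddCommGroup M] [Module R M]
variable (n : ℕ) (ι : M → M)

theorem aux_zero (h2 : ∀ ω, ι (n • ω) = ω) : ι 0 = 0 := by
  have := h2 0; rwa [smul_zero] at this

theorem aux_add (h1 : ∀ ω, n • ι ω = ω) (h2 : ∀ ω, ι (n • ω) = ω) (a b : M) :
    ι (a + b) = ι a + ι b := by
  have h : n • (ι a + ι b) = a + b := by rw [smul_add, h1, h1]
  rw [← h, h2]

theorem aux_smul (h1 : ∀ ω, n • ι ω = ω) (h2 : ∀ ω, ι (n • ω) = ω) (r : R) (a : M) :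
    ι (r • a) = r • ι a := by
  have h : n • (r • ι a) = r • a := by rw [smul_comm, h1]
  rw [← h, h2]

theorem iter_zero (h2 : ∀ ω, ι (n • ω) = ω) (j : ℕ) : ι^[j] 0 = 0 := by
  induction j with
  | zero => rfl
  | succ j ih => rw [Function.iterate_succ_apply, aux_zero n ι h2, ih]

theorem iter_add (h1 : ∀ ω, n • ι ω = ω) (h2 : ∀ ω, ι (n • ω) = ω) (j : ℕ) (a b : M) :
    ι^[j] (a + b) = ι^[j] a + ι^[j] b := by
  induction j generalizing a b with
  | zero => rfl
  | succ j ih => rw [Function.iterate_succ_apply, aux_add n ι h1 h2,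
      Function.iterate_succ_apply, Function.iterate_succ_apply, ih]

theorem iter_smul (h1 : ∀ ω, n • ι ω = ω) (h2 : ∀ ω, ι (n • ω) = ω) (j : ℕ) (r : R) (a : M) :
    ι^[j] (r • a) = r • ι^[j] a := by
  induction j generalizing a with
  | zero => rfl
  | succ j ih => rw [Function.iterate_succ_apply, aux_smul n ι h1 h2,
      Function.iterate_succ_apply, ih]

theorem iter_pow (h2 : ∀ ω, ι (n • ω) = ω) (j : ℕ) (a : M) :
    ι^[j] (n ^ j • a) = a := by
  induction j generalizing a with
  | zero => simp
  | succ j ih =>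
    rw [Function.iterate_succ_apply, pow_succ', mul_smul, h2, ih]

end aux

/-- The operation `x • (α, a) = (φ^j(x)·α − ι^{∘j}(a·d(φ^j(x))), φ^j(x)·a)`
on `Ω¹_A × A`, where `A = W(k)`, `φ` is the Witt vector Frobenius and
`ι` is the inverse of multiplication by `p` on `Ω¹_A`. -/
noncomputable def smulOp (p : ℕ) [Fact p.Prime] {k : Type*} [CommRing k] (j : ℕ)
    (ι : Ω[WittVector p k⁄ℤ] → Ω[WittVector p k⁄ℤ])
    (x : WittVector p k) (q : Ω[WittVector p k⁄ℤ] × WittVector p k) :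
    Ω[WittVector p k⁄ℤ] × WittVector p k :=
  ((⇑(WittVector.frobenius))^[j] x • q.1
      - ι^[j] (q.2 • KaehlerDifferential.D ℤ (WittVector p k) ((⇑(WittVector.frobenius))^[j] x)),
    (⇑(WittVector.frobenius))^[j] x * q.2)

/-- The map `h_j : A → Ω¹_A × A`, `a ↦ (−d(a), p^j·a)`. -/
noncomputable def hMap (p : ℕ) [Fact p.Prime] {k : Type*} [CommRing k] (j : ℕ)
    (a : WittVector p k) : Ω[WittVector p k⁄ℤ] × WittVector p k :=
  (-(KaehlerDifferential.D ℤ (WittVector p k) a), (p : WittVector p k) ^ j * a)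

theorem stmt_14 (p : ℕ) [Fact p.Prime] (hp : Odd p)
    (k : Type*) [CommRing k] [CharP k p] [PerfectRing k p]
    (j : ℕ) (hj : 1 ≤ j)
    (ι : Ω[WittVector p k⁄ℤ] → Ω[WittVector p k⁄ℤ])
    (hι1 : ∀ ω : Ω[WittVector p k⁄ℤ], p • ι ω = ω)
    (hι2 : ∀ ω : Ω[WittVector p k⁄ℤ], ι (p • ω) = ω) :
    (∀ q : Ω[WittVector p k⁄ℤ] × WittVector p k, smulOp p j ι 1 q = q) ∧
    (∀ (x x' : WittVector p k) (q : Ω[WittVector p k⁄ℤ] × WittVector p k),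
      smulOp p j ι (x * x') q = smulOp p j ι x (smulOp p j ι x' q)) ∧
    (∀ (x : WittVector p k) (q r : Ω[WittVector p k⁄ℤ] × WittVector p k),
      smulOp p j ι x (q + r) = smulOp p j ι x q + smulOp p j ι x r) ∧
    (∀ (x x' : WittVector p k) (q : Ω[WittVector p k⁄ℤ] × WittVector p k),
      smulOp p j ι (x + x') q = smulOp p j ι x q + smulOp p j ι x' q) ∧
    (∀ a a' : WittVector p k, hMap p j (a + a') = hMap p j a + hMap p j a') ∧
    (∀ x a : WittVector p k,
      hMap p j ((⇑(WittVector.frobenius))^[j] x * a) = smulOp p j ι x (hMap p j a)) := by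
  set D := KaehlerDifferential.D ℤ (WittVector p k) with hD
  refine ⟨?_, ?_, ?_, ?_, ?_, ?_⟩
  · intro q
    simp [smulOp, iterate_map_one, Derivation.map_one_eq_zero,
      iter_zero p ι hι2, one_smul]
  · intro x x' q
    rw [Prod.ext_iff]
    constructor
    · simp only [smulOp, iterate_map_mul, Derivation.leibniz, smul_add, smul_sub,
        iter_add p ι hι1 hι2, iter_smul p ι hι1 hι2, smul_smul]
      module
    · simp only [smulOp, iterate_map_mul]
      ring
  · intro x q r
    rw [Prod.ext_iff]
    constructor
    · simp only [smulOp, Prod.fst_add, Prod.snd_add, smul_add, add_smul,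
        iter_add p ι hι1 hι2]
      abel
    · simp only [smulOp, Prod.fst_add, Prod.snd_add]
      ring
  · intro x x' q
    rw [Prod.ext_iff]
    constructor
    · simp only [smulOp, iterate_map_add, map_add, smul_add, add_smul,
        iter_add p ι hι1 hι2, Prod.fst_add, Prod.snd_add]
      abel
    · simp only [smulOp, iterate_map_add, Prod.snd_add]
      ring
  · intro a a'
    simp [hMap, Prod.ext_iff, map_add, mul_add, neg_add, add_comm]
  · intro x a
    rw [Prod.ext_iff]
    constructor
    · have key : ι^[j] (((p : WittVector p k) ^ j * a) •
          D ((⇑(WittVector.frobenius))^[j] x)) = a • D ((⇑(WittVector.frobenius))^[j] x) := by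
        rw [mul_smul, ← Nat.cast_pow, Nat.cast_smul_eq_nsmul]
        exact iter_pow p ι hι2 j _
      simp only [hMap, smulOp, ← hD, key, Derivation.leibniz]
      module
    · simp only [hMap, smulOp]
      ring
end

section
/- Let x ∈ A and let π : W(A) → W(A/xA) be the ring homomorphism induced by the quotient map A → A/xA. Then for y ∈ W(A), one has π(y) = 0 if and only if there exists a sequence (a_k) in A such that y = Σ_{k=0}^∞ s_φ(a_k)·V^k([x]) in W(A), i.e., such that for every n ≥ 0 the element y − Σ_{k=0}^{n−1} s_φ(a_k)·V^k([x]) lies in the image of V^n. -/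
open WittVector

section Aux

variable {p : ℕ} [hp : Fact p.Prime] {R S : Type*} [CommRing R] [CommRing S]

lemma aux_gc0 (u : WittVector p R) : WittVector.ghostComponent 0 u = u.coeff 0 := by
  simp [WittVector.ghostComponent_apply, wittPolynomial_zero]

lemma aux_iter_versch_coeff_lt (w : WittVector p R) :
    ∀ (i j : ℕ), j < i → ((⇑(WittVector.verschiebung (p := p) (R := R)))^[i] w).coeff j = 0 := by
  intro i
  induction i with
  | zero => intro j hj; omega
  | succ i ih =>
    intro j hj
    rw [Function.iterate_succ_apply']
    cases j with
    | zero => exact WittVector.verschiebung_coeff_zero _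
    | succ j =>
      rw [WittVector.verschiebung_coeff_succ]
      exact ih j (by omega)

lemma aux_map_iter_versch (f : R →+* S) (i : ℕ) (w : WittVector p R) :
    WittVector.map f ((⇑WittVector.verschiebung)^[i] w)
      = (⇑WittVector.verschiebung)^[i] (WittVector.map f w) := by
  induction i with
  | zero => rfl
  | succ i ih =>
    rw [Function.iterate_succ_apply', Function.iterate_succ_apply',
      WittVector.map_verschiebung, ih]

lemma aux_iter_versch_sub (n : ℕ) (a b : WittVector p R) :
    (⇑WittVector.verschiebung)^[n] (a - b)
      = (⇑WittVector.verschiebung)^[n] a - (⇑WittVector.verschiebung)^[n] b := by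
  induction n with
  | zero => rfl
  | succ n ih =>
    rw [Function.iterate_succ_apply', Function.iterate_succ_apply',
      Function.iterate_succ_apply', ih, map_sub]

lemma aux_iter_versch_zero (n : ℕ) :
    (⇑(WittVector.verschiebung (p := p) (R := R)))^[n] 0 = 0 := by
  induction n with
  | zero => rfl
  | succ n ih => rw [Function.iterate_succ_apply', ih, map_zero]

lemma aux_versch_inj (w : WittVector p R)
    (h : WittVector.verschiebung w = 0) : w = 0 := by
  ext n
  have := congrArg (fun u : WittVector p R => u.coeff (n + 1)) h
  simpa [WittVector.verschiebung_coeff_succ] using this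

lemma aux_gc_frob_iter (m i : ℕ) (w : WittVector p R) :
    WittVector.ghostComponent m ((⇑WittVector.frobenius)^[i] w)
      = WittVector.ghostComponent (m + i) w := by
  induction i generalizing m with
  | zero => rfl
  | succ i ih =>
    rw [Function.iterate_succ_apply', WittVector.ghostComponent_frobenius, ih,
      show m + (i + 1) = m + 1 + i by omega]

end Aux

theorem stmt_15 (p : ℕ) [Fact p.Prime] (hp : Odd p)
    (k : Type*) [CommRing k] [CharP k p] [PerfectRing k p]
    (s : WittVector p k →+* WittVector p (WittVector p k))
    (hs : ∀ (a : WittVector p k) (n : ℕ),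
      WittVector.ghostComponent n (s a) = (⇑(WittVector.frobenius))^[n] a)
    (x : WittVector p k)
    (y : WittVector p (WittVector p k)) :
    WittVector.map (Ideal.Quotient.mk (Ideal.span {x})) y = 0 ↔
      ∃ a : ℕ → WittVector p k, ∀ n : ℕ, ∃ z : WittVector p (WittVector p k),
        y - ∑ i ∈ Finset.range n,
              s (a i) * (⇑(WittVector.verschiebung))^[i] (WittVector.teichmuller p x)
          = (⇑(WittVector.verschiebung))^[n] z := by
  classical
  set π := WittVector.map (p := p) (Ideal.Quotient.mk (Ideal.span {x})) with hπdef
  have hmkx : Ideal.Quotient.mk (Ideal.span {x}) x = 0 := by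
    rw [Ideal.Quotient.eq_zero_iff_mem]
    exact Ideal.mem_span_singleton_self x
  have hπT : π (WittVector.teichmuller p x) = 0 := by
    rw [hπdef, WittVector.map_teichmuller, hmkx, WittVector.teichmuller_zero]
  constructor
  · intro hy
    have step : ∀ (n : ℕ) (z : {z : WittVector p (WittVector p k) // π z = 0}),
        ∃ (a : WittVector p k) (z' : {z : WittVector p (WittVector p k) // π z = 0}),
          (⇑WittVector.verschiebung)^[n] z.1
              - s a * (⇑WittVector.verschiebung)^[n] (WittVector.teichmuller p x)
            = (⇑WittVector.verschiebung)^[n + 1] z'.1 := by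
      rintro n ⟨z, hz⟩
      have h0 : z.coeff 0 ∈ Ideal.span {x} := by
        have := congrArg (fun u : WittVector p (WittVector p k ⧸ Ideal.span {x}) =>
          u.coeff 0) hz
        simp only [hπdef, WittVector.map_coeff, WittVector.zero_coeff] at this
        exact Ideal.Quotient.eq_zero_iff_mem.mp this
      obtain ⟨c, hc⟩ := Ideal.mem_span_singleton'.mp h0
      obtain ⟨a, ha⟩ := ((WittVector.frobenius_bijective p k).surjective.iterate n) c
      set u := z - WittVector.teichmuller p x * (⇑WittVector.frobenius)^[n] (s a) with hu
      have hF0 : ((⇑WittVector.frobenius)^[n] (s a)).coeff 0 = c := by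
        rw [← aux_gc0, aux_gc_frob_iter, Nat.zero_add, hs, ha]
      have hu0 : u.coeff 0 = 0 := by
        rw [← aux_gc0, hu, map_sub, map_mul, aux_gc0, aux_gc0, aux_gc0,
          WittVector.teichmuller_coeff_zero, hF0, ← hc]
        ring
      have hushift : u = WittVector.verschiebung (u.shift 1) := by
        have := WittVector.eq_iterate_verschiebung (x := u) (n := 1)
          (by intro i hi; interval_cases i; exact hu0)
        simpa using this
      have hπu : π u = 0 := by
        rw [hu, map_sub, map_mul, hz, hπT]
        ring
      have hπz' : π (u.shift 1) = 0 := by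
        apply aux_versch_inj
        rw [← WittVector.map_verschiebung, ← hushift, hπu]
      refine ⟨a, ⟨u.shift 1, hπz'⟩, ?_⟩
      have hmul : s a * (⇑WittVector.verschiebung)^[n] (WittVector.teichmuller p x)
          = (⇑WittVector.verschiebung)^[n]
              (WittVector.teichmuller p x * (⇑WittVector.frobenius)^[n] (s a)) := by
        rw [mul_comm, WittVector.iterate_verschiebung_mul_left]
      rw [hmul, ← aux_iter_versch_sub]
      show (⇑WittVector.verschiebung)^[n] u
        = (⇑WittVector.verschiebung)^[n + 1] (u.shift 1)
      rw [Function.iterate_succ_apply, ← hushift]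
    choose f g hfg using step
    let Z : ℕ → {z : WittVector p (WittVector p k) // π z = 0} :=
      fun n => Nat.rec ⟨y, hy⟩ (fun m zm => g m zm) n
    have hZ : ∀ n, Z (n + 1) = g n (Z n) := fun n => rfl
    have key : ∀ n, y - ∑ i ∈ Finset.range n,
        s (f i (Z i)) * (⇑WittVector.verschiebung)^[i] (WittVector.teichmuller p x)
          = (⇑WittVector.verschiebung)^[n] (Z n).1 := by
      intro n
      induction n with
      | zero => simp [Z]
      | succ n ih =>
        rw [Finset.sum_range_succ, ← sub_sub, ih, hZ]
        exact hfg n (Z n)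
    exact ⟨fun n => f n (Z n), fun n => ⟨(Z n).1, key n⟩⟩
  · rintro ⟨a, ha⟩
    ext n
    obtain ⟨z, hz⟩ := ha (n + 1)
    have hπS : π (∑ i ∈ Finset.range (n + 1),
        s (a i) * (⇑WittVector.verschiebung)^[i] (WittVector.teichmuller p x)) = 0 := by
      rw [map_sum]
      apply Finset.sum_eq_zero
      intro i _
      rw [map_mul, hπdef, aux_map_iter_versch, ← hπdef, hπT, aux_iter_versch_zero, mul_zero]
    have hπy : π y = (⇑WittVector.verschiebung)^[n + 1] (π z) := by
      have := congrArg π hz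
      rw [map_sub, hπS, sub_zero, hπdef, aux_map_iter_versch] at this
      exact this
    rw [hπy, WittVector.zero_coeff, aux_iter_versch_coeff_lt _ _ _ (Nat.lt_succ_self n)]
end

section
/- Let p be a prime and let B be a commutative ring in which p is not a zero divisor. Let ω, η ∈ Ω¹_B and let n ≥ 1 and r ≥ 1 be integers such that p^r·η = ω and such that the annihilator of ω is contained in p^n·B (i.e., every b ∈ B with b·ω = 0 satisfies b ∈ p^n·B). Then the annihilator of η is contained in p^{n+r}·B. -/
theorem stmt_17 (p : ℕ) (hp : p.Prime)
    (B : Type*) [CommRing B]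
    (hptf : ∀ b : B, (p : B) * b = 0 → b = 0)
    (ω η : Ω[B⁄ℤ]) (n r : ℕ) (hn : 1 ≤ n) (hr : 1 ≤ r)
    (hη : (p : B) ^ r • η = ω)
    (hann : ∀ b : B, b • ω = 0 → ∃ c : B, b = (p : B) ^ n * c) :
    ∀ b : B, b • η = 0 → ∃ c : B, b = (p : B) ^ (n + r) * c := by
  have cancel : ∀ (k : ℕ) (a : B), (p : B) ^ k * a = 0 → a = 0 := by
    intro k
    induction k with
    | zero => intro a h; simpa using h
    | succ k ih =>
      intro a h
      rw [pow_succ, mul_assoc] at h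
      exact hptf a (ih _ h)
  have aux : ∀ (j m : ℕ) (c : B), n + r - m ≤ j → m ≤ n + r →
      ((p : B) ^ m * c) • η = 0 → ∃ d : B, (p : B) ^ m * c = (p : B) ^ (n + r) * d := by
    intro j
    induction j with
    | zero =>
      intro m c hj hm h0
      have hm' : m = n + r := le_antisymm hm (by omega)
      exact ⟨c, by rw [hm']⟩
    | succ j ih =>
      intro m c hj hm h0
      by_cases hmr : r ≤ m
      · have h1 : ((p : B) ^ (m - r) * c) • ω = 0 := by
          rw [← hη, smul_smul]
          have e1 : (p : B) ^ (m - r) * c * (p : B) ^ r = (p : B) ^ m * c := by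
            rw [mul_comm _ ((p:B)^r), ← mul_assoc, ← pow_add]
            congr 2
            omega
          rw [e1, h0]
        obtain ⟨d, hd⟩ := hann _ h1
        have hc : c = (p : B) ^ (n + r - m) * d := by
          have h2 : (p : B) ^ (m - r) * (c - (p : B) ^ (n + r - m) * d) = 0 := by
            rw [mul_sub, hd, ← mul_assoc, ← pow_add]
            have : m - r + (n + r - m) = n := by omega
            rw [this, sub_self]
          have := cancel _ _ h2
          exact sub_eq_zero.mp this
        refine ⟨d, ?_⟩
        rw [hc, ← mul_assoc, ← pow_add]
        congr 2
        omega
      · have h1 : ((p : B) ^ r * c) • η = 0 := by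
          have e1 : (p : B) ^ r * c = (p : B) ^ (r - m) * ((p : B) ^ m * c) := by
            rw [← mul_assoc, ← pow_add]
            congr 2
            omega
          rw [e1, mul_smul, h0, smul_zero]
        have h2 : c • ω = 0 := by
          rw [← hη, smul_smul, mul_comm]
          exact h1
        obtain ⟨e, he⟩ := hann c h2
        have h3 : ((p : B) ^ (m + n) * e) • η = 0 := by
          have e2 : (p : B) ^ (m + n) * e = (p : B) ^ m * c := by
            rw [he, pow_add, mul_assoc]
          rw [e2]
          exact h0
        obtain ⟨d, hd⟩ := ih (m + n) e (by omega) (by omega) h3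
        refine ⟨d, ?_⟩
        rw [he, ← mul_assoc, ← pow_add, ← hd, pow_add, mul_assoc]
  intro b hb
  have hbω : b • ω = 0 := by
    rw [← hη, smul_smul, mul_comm, mul_smul, hb, smul_zero]
  obtain ⟨c, hc⟩ := hann b hbω
  have h0 : ((p : B) ^ n * c) • η = 0 := by rw [← hc]; exact hb
  obtain ⟨d, hd⟩ := aux (n + r) n c (by omega) (by omega) h0
  exact ⟨d, by rw [hc, hd]⟩
end
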